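/- arXiv:1302.6640 — 2 statements merged into one kernel-verified Lean document; each statement's English description precedes it below -/
import Mathlib

section
/- Let ν ∈ Λ with R_ν ≠ 0. Then the canonical ring homomorphism R_0 → End_{R_0}(R_ν), sending r ∈ R_0 to the endomorphism given by multiplication by r, is bijective; that is, every R_0-module endomorphism of R_ν is multiplication by a unique element of R_0. -/
/-!
Fix `0 ≠ b ∈ R_ν`. Birationality makes any two elements of `R_ν` dependent over `R_0`, so an
`R_0`-linear `f` is determined by `f b`, and writing `f b / b = c / d` gives `d • f = c • id`.
As `R` is noetherian, `R_ν` is a finite `R_0`-module, so `f` is a root of a monic `p ∈ R_0[X]`;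
applying `d ^ deg p • p(f) = 0` to `b` shows that `c / d` is a root of `p` too, hence lies in
`R_0`.
-/

open Polynomial

theorem IsIntegrallyClosed.dvd_of_isRoot_scaleRoots {A : Type*} [CommRing A] [IsDomain A]
    [IsIntegrallyClosed A] {p : A[X]} (hp : p.Monic) {c d : A} (hd : d ≠ 0)
    (h : (p.scaleRoots d).IsRoot c) : d ∣ c := by
  let K := FractionRing A
  have hdK : algebraMap A K d ≠ 0 := (map_ne_zero_iff _ (IsFractionRing.injective A K)).2 hd
  have hroot : aeval (algebraMap A K c / algebraMap A K d) p = 0 := by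
    have := scaleRoots_eval₂_mul (algebraMap A K) (algebraMap A K c / algebraMap A K d) d (p := p)
    rw [mul_div_cancel₀ _ hdK, eval₂_at_apply, h.eq_zero, map_zero, eq_comm] at this
    exact (mul_eq_zero.1 this).resolve_left (pow_ne_zero _ hdK)
  obtain ⟨e, he⟩ := IsIntegrallyClosed.isIntegral_iff.1 ⟨p, hp, hroot⟩
  refine ⟨e, IsFractionRing.injective A K ?_⟩
  rw [map_mul, he, mul_div_cancel₀ _ hdK]

namespace Module.End

variable {A M : Type*} [CommRing A] [AddCommGroup M] [Module A M]

theorem pow_smul_pow_apply {F : Module.End A M} {c d : A} (hF : ∀ m, d • F m = c • m) (i : ℕ)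
    (m : M) : d ^ i • (F ^ i) m = c ^ i • m := by
  induction i with
  | zero => simp
  | succ i ih =>
    rw [pow_succ', pow_succ', pow_succ', mul_comm, mul_smul, mul_apply, hF, smul_comm, ih,
      mul_smul]

theorem eval_scaleRoots_smul {F : Module.End A M} {c d : A} (hF : ∀ m, d • F m = c • m)
    (p : A[X]) (m : M) : (p.scaleRoots d).eval c • m = d ^ p.natDegree • aeval F p m := by
  rw [eval_eq_sum_range, natDegree_scaleRoots, aeval_eq_sum_range, Finset.sum_smul,
    LinearMap.sum_apply, Finset.smul_sum]
  refine Finset.sum_congr rfl fun i hi => ?_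
  have hi : i ≤ p.natDegree := Nat.lt_succ_iff.1 (Finset.mem_range.1 hi)
  rw [coeff_scaleRoots, LinearMap.smul_apply, mul_smul, ← pow_smul_pow_apply hF, smul_smul,
    smul_smul, ← pow_sub_mul_pow d hi]
  ring_nf

variable [IsDomain A] [Module.IsTorsionFree A M]

theorem exists_eq_smul_of_smul_apply_eq [IsIntegrallyClosed A] [Module.Finite A M]
    (F : Module.End A M) {c d : A} (hd : d ≠ 0) (hF : ∀ m, d • F m = c • m) :
    ∃ e : A, ∀ m, F m = e • m := by
  rcases subsingleton_or_nontrivial M with hM | hM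
  · exact ⟨0, fun m => Subsingleton.elim _ _⟩
  obtain ⟨p, hp, hpF⟩ := Algebra.IsIntegral.isIntegral (R := A) F
  obtain ⟨m, hm⟩ := exists_ne (0 : M)
  have hroot : (p.scaleRoots d).IsRoot c := by
    have := eval_scaleRoots_smul hF p m
    rw [← aeval_def] at hpF
    rw [hpF, LinearMap.zero_apply, smul_zero, smul_eq_zero] at this
    exact this.resolve_right hm
  obtain ⟨e, rfl⟩ := IsIntegrallyClosed.dvd_of_isRoot_scaleRoots hp hd hroot
  exact ⟨e, fun m => smul_right_injective M hd <| by simp only [hF, mul_smul]⟩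

theorem exists_smul_apply_eq_of_forall_dependent
    (hM : ∀ a b : M, b ≠ 0 → ∃ c d : A, d ≠ 0 ∧ d • a = c • b) (F : Module.End A M) :
    ∃ c d : A, d ≠ 0 ∧ ∀ m, d • F m = c • m := by
  rcases subsingleton_or_nontrivial M with hM' | hM'
  · exact ⟨0, 1, one_ne_zero, fun m => Subsingleton.elim _ _⟩
  obtain ⟨b, hb⟩ := exists_ne (0 : M)
  obtain ⟨c, d, hd, hFb⟩ := hM (F b) b hb
  refine ⟨c, d, hd, fun m => ?_⟩
  obtain ⟨c', d', hd', hm⟩ := hM m b hb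
  refine smul_right_injective M hd' ?_
  calc d' • d • F m = d • F (d' • m) := by rw [map_smul, smul_comm]
    _ = c' • d • F b := by rw [hm, map_smul, smul_comm]
    _ = d' • c • m := by rw [hFb, smul_comm c', ← hm, smul_comm]

theorem exists_eq_smul_of_forall_dependent [IsIntegrallyClosed A] [Module.Finite A M]
    (hM : ∀ a b : M, b ≠ 0 → ∃ c d : A, d ≠ 0 ∧ d • a = c • b) (F : Module.End A M) :
    ∃ e : A, ∀ m, F m = e • m :=
  let ⟨_, _, hd, hF⟩ := exists_smul_apply_eq_of_forall_dependent hM F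
  exists_eq_smul_of_smul_apply_eq F hd hF

end Module.End

namespace GradedRing

variable {ι R σ : Type*} [CommRing R] [SetLike σ R] [AddSubgroupClass σ R] (𝒜 : ι → σ)

def gradeSubmodule [AddMonoid ι] [SetLike.GradedMonoid 𝒜] (i : ι) : Submodule (𝒜 0) R where
  carrier := 𝒜 i
  add_mem' := add_mem
  zero_mem' := zero_mem _
  smul_mem' a _ hx := by simpa [Algebra.smul_def] using SetLike.mul_mem_graded a.2 hx

variable [DecidableEq ι] [AddRightCancelMonoid ι] [GradedRing 𝒜]

theorem proj_mul_of_mem {i : ι} (a : R) {b : R} (hb : b ∈ 𝒜 i) :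
    proj 𝒜 i (a * b) = proj 𝒜 0 a * b := by
  have := DirectSum.coe_decompose_mul_add_of_right_mem 𝒜 (i := 0) (a := a) hb
  rwa [zero_add] at this

theorem fg_gradeSubmodule [IsNoetherianRing R] (i : ι) : (gradeSubmodule 𝒜 i).FG := by
  obtain ⟨S, hS𝒜, hS⟩ := (Submodule.fg_span_iff_fg_span_finset_subset (𝒜 i : Set R)).1
    (IsNoetherian.noetherian (Ideal.span (𝒜 i : Set R)))
  refine ⟨S, le_antisymm (Submodule.span_le.2 hS𝒜) fun x hx => ?_⟩
  have hxS : x ∈ Submodule.span R (S : Set R) := hS ▸ Submodule.subset_span hx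
  obtain ⟨g, -, rfl⟩ := Submodule.mem_span_finset.1 hxS
  have hproj : proj 𝒜 i (∑ s ∈ S, g s • s) = ∑ s ∈ S, g s • s :=
    DirectSum.decompose_of_mem_same 𝒜 hx
  rw [← hproj, map_sum]
  refine Submodule.sum_mem _ fun s hs => ?_
  rw [smul_eq_mul, proj_mul_of_mem 𝒜 _ (hS𝒜 hs)]
  exact Submodule.smul_mem _ (DirectSum.decompose 𝒜 (g s) 0) (Submodule.subset_span hs)

end GradedRing

theorem stmt5_general (k : Type u) [Field k]
    (G : Type u) [AddCommGroup G] [DecidableEq G]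
    (Λ : AddSubmonoid G)
    (R : Type u) [CommRing R] [IsDomain R] [Algebra k R] [Algebra.FiniteType k R]
    (𝒜 : ↥Λ → Submodule k R) [GradedAlgebra 𝒜]
    -- birationality: every ratio of homogeneous elements of equal degree is a ratio of
    -- degree-zero elements
    (hbir : ∀ (μ : ↥Λ) (a b : R), a ∈ 𝒜 μ → b ∈ 𝒜 μ → b ≠ 0 →
      ∃ c d : R, c ∈ 𝒜 0 ∧ d ∈ 𝒜 0 ∧ d ≠ 0 ∧ a * d = b * c)
    -- R_0 is integrally closed in its fraction field
    (hIC : IsIntegrallyClosed ↥(𝒜 0))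
    (ν : ↥Λ) (hν : 𝒜 ν ≠ ⊥) :
    ∀ f : ↥(𝒜 ν) → ↥(𝒜 ν),
      (∀ x y : ↥(𝒜 ν), f (x + y) = f x + f y) →
      (∀ (r : R), r ∈ 𝒜 0 → ∀ (x : ↥(𝒜 ν)) (h : r * ↑x ∈ 𝒜 ν),
        (↑(f ⟨r * ↑x, h⟩) : R) = r * ↑(f x)) →
      ∃ r₀ ∈ 𝒜 0, (∀ x : ↥(𝒜 ν), (↑(f x) : R) = r₀ * ↑x) ∧
        ∀ r₁ ∈ 𝒜 0, (∀ x : ↥(𝒜 ν), (↑(f x) : R) = r₁ * ↑x) → r₁ = r₀ := by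
  intro f hadd hsmul
  let : AddRightCancelMonoid Λ :=
    { (inferInstance : AddMonoid Λ), (inferInstance : IsRightCancelAdd Λ) with }
  have : IsNoetherianRing R := Algebra.FiniteType.isNoetherianRing k R
  let M := GradedRing.gradeSubmodule 𝒜 ν
  have : Module.Finite (𝒜 0) M := .of_fg (GradedRing.fg_gradeSubmodule 𝒜 ν)
  have : IsDomain (𝒜 0) := inferInstanceAs (IsDomain (SetLike.GradeZero.subring 𝒜))
  have : Module.IsTorsionFree (𝒜 0) R :=
    inferInstanceAs (Module.IsTorsionFree (SetLike.GradeZero.subalgebra 𝒜) R)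
  let F : Module.End (𝒜 0) M :=
    { toFun x := ⟨f ⟨x, x.2⟩, (f _).2⟩
      map_add' x y := Subtype.ext congr($(hadd ⟨x, x.2⟩ ⟨y, y.2⟩).1)
      map_smul' a x := Subtype.ext (hsmul a a.2 ⟨x, x.2⟩ _) }
  have hdep : ∀ a b : M, b ≠ 0 → ∃ c d : 𝒜 0, d ≠ 0 ∧ d • a = c • b := fun a b hb => by
    obtain ⟨c, d, hc, hd, hd0, h⟩ := hbir ν a b a.2 b.2 (by simpa using hb)
    refine ⟨⟨c, hc⟩, ⟨d, hd⟩, by simpa using hd0, Subtype.ext ?_⟩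
    simpa [Algebra.smul_def, mul_comm] using h
  obtain ⟨e, he⟩ := Module.End.exists_eq_smul_of_forall_dependent (M := M) hdep F
  have hfe : ∀ x, (f x : R) = e * x := fun x => congr($(he ⟨x, x.2⟩).1)
  obtain ⟨b, hb, hb0⟩ := (Submodule.ne_bot_iff _).1 hν
  exact ⟨e, e.2, hfe, fun r _ hr =>
    mul_right_cancel₀ hb0 ((hr ⟨b, hb⟩).symm.trans (hfe ⟨b, hb⟩))⟩

theorem stmt5 (k : Type u) [Field k]
    (G : Type u) [AddCommGroup G] [DecidableEq G] [Module.Free ℤ G] [Module.Finite ℤ G]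
    (Λ : AddSubmonoid G) (hΛ : ∀ g : G, g ∈ Λ → -g ∈ Λ → g = 0)
    (R : Type u) [CommRing R] [IsDomain R] [Algebra k R] [Algebra.FiniteType k R]
    (𝒜 : ↥Λ → Submodule k R) [GradedAlgebra 𝒜]
    (hmul : ∀ μ ν : ↥Λ, 𝒜 μ * 𝒜 ν = 𝒜 (μ + ν))
    -- birationality: every ratio of homogeneous elements of equal degree is a ratio of
    -- degree-zero elements
    (hbir : ∀ (μ : ↥Λ) (a b : R), a ∈ 𝒜 μ → b ∈ 𝒜 μ → b ≠ 0 →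
      ∃ c d : R, c ∈ 𝒜 0 ∧ d ∈ 𝒜 0 ∧ d ≠ 0 ∧ a * d = b * c)
    -- R_0 is integrally closed in its fraction field
    (hIC : IsIntegrallyClosed ↥(𝒜 0))
    (ν : ↥Λ) (hν : 𝒜 ν ≠ ⊥) :
    ∀ f : ↥(𝒜 ν) → ↥(𝒜 ν),
      (∀ x y : ↥(𝒜 ν), f (x + y) = f x + f y) →
      (∀ (r : R), r ∈ 𝒜 0 → ∀ (x : ↥(𝒜 ν)) (h : r * ↑x ∈ 𝒜 ν),
        (↑(f ⟨r * ↑x, h⟩) : R) = r * ↑(f x)) →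
      ∃ r₀ ∈ 𝒜 0, (∀ x : ↥(𝒜 ν), (↑(f x) : R) = r₀ * ↑x) ∧
        ∀ r₁ ∈ 𝒜 0, (∀ x : ↥(𝒜 ν), (↑(f x) : R) = r₁ * ↑x) → r₁ = r₀ :=
  stmt5_general k G Λ R 𝒜 hbir hIC ν hν
end

section
/- Let ν ∈ Λ with R_ν ≠ 0 and let x ∈ R_ν be nonzero. Then there exists a nonzero y ∈ R_0 such that y·R_ν ⊆ x·R_0; that is, for every r ∈ R_ν there is r_0 ∈ R_0 with y·r = x·r_0. In particular R_ν is isomorphic as an R_0-module to a nonzero R_0-submodule of Frac(R_0), so R_ν is a torsion-free R_0-module of rank one. -/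
/-!
Since `R` is noetherian, the ideal generated by `R_ν` is generated by finitely many
`t ∈ R_ν`. Birationality writes each `t / x` with a nonzero denominator `d_t ∈ R_0`, so
`y = ∏ d_t` makes `x ∣ y * t` for every generator, hence `x ∣ y * r` for every `r ∈ R_ν`.
The quotient `y * r / x` is then of degree `0`: multiplying by a nonzero homogeneous
element of a graded domain shifts degrees.
-/

universe u

instance AddSubmonoid.instAddCancelCommMonoid {M : Type*} [AddCancelCommMonoid M]
    (S : AddSubmonoid M) : AddCancelCommMonoid S :=
  { S.toAddCommMonoid with
    add_left_cancel := fun _ _ _ h => Subtype.ext (add_left_cancel (congrArg Subtype.val h)) }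

theorem DirectSum.mem_zero_of_mul_mem {ι A σ : Type*} [AddLeftCancelMonoid ι] [DecidableEq ι]
    [Semiring A] [IsLeftCancelMulZero A] [SetLike σ A] [AddSubmonoidClass σ A]
    (𝒜 : ι → σ) [GradedRing 𝒜] {i : ι} {a b : A}
    (ha : a ∈ 𝒜 i) (ha0 : a ≠ 0) (hab : a * b ∈ 𝒜 i) : b ∈ 𝒜 0 := by
  have h := coe_decompose_mul_add_of_left_mem 𝒜 (b := b) (j := 0) ha
  rw [add_zero, decompose_of_mem_same 𝒜 hab] at h
  rw [mul_left_cancel₀ ha0 h]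
  exact SetLike.coe_mem _

theorem Submonoid.exists_mem_forall_dvd_mul {R : Type*} [CommMonoid R] (M : Submonoid R)
    (x : R) (U : Finset R) (h : ∀ t ∈ U, ∃ d ∈ M, x ∣ d * t) :
    ∃ y ∈ M, ∀ t ∈ U, x ∣ y * t := by
  classical
  induction U using Finset.induction_on with
  | empty => exact ⟨1, M.one_mem, by simp⟩
  | insert a U _ ih =>
    obtain ⟨d, hd, hda⟩ := h a (Finset.mem_insert_self a U)
    obtain ⟨y, hy, hyU⟩ := ih fun t ht => h t (Finset.mem_insert_of_mem ht)
    refine ⟨d * y, M.mul_mem hd hy, fun t ht => ?_⟩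
    rcases Finset.mem_insert.1 ht with rfl | ht
    · rw [mul_right_comm]
      exact hda.mul_right y
    · rw [mul_assoc]
      exact (hyU t ht).mul_left d

theorem Ideal.dvd_mul_of_mem_span {R : Type*} [CommRing R] {s : Set R} {x y r : R}
    (hs : ∀ t ∈ s, x ∣ y * t) (hr : r ∈ Ideal.span s) : x ∣ y * r := by
  have hle : Ideal.span s ≤ (Ideal.span {x}).colon {y} :=
    Ideal.span_le.2 fun t ht => Submodule.mem_colon_singleton.2 <| by
      simpa [Ideal.mem_span_singleton, mul_comm] using hs t ht
  simpa [Ideal.mem_span_singleton, mul_comm] using Submodule.mem_colon_singleton.1 (hle hr)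

theorem stmt6_general (k : Type u) [Field k]
    (G : Type u) [AddCommGroup G] [DecidableEq G]
    (Λ : AddSubmonoid G)
    (R : Type u) [CommRing R] [IsDomain R] [Algebra k R] [Algebra.FiniteType k R]
    (𝒜 : ↥Λ → Submodule k R) [GradedAlgebra 𝒜]
    -- birationality: every ratio of homogeneous elements of equal degree is a ratio of
    -- degree-zero elements
    (hbir : ∀ (μ : ↥Λ) (a b : R), a ∈ 𝒜 μ → b ∈ 𝒜 μ → b ≠ 0 →
      ∃ c d : R, c ∈ 𝒜 0 ∧ d ∈ 𝒜 0 ∧ d ≠ 0 ∧ a * d = b * c)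
    (ν : ↥Λ)
    (x : R) (hx : x ∈ 𝒜 ν) (hx0 : x ≠ 0) :
    ∃ y ∈ 𝒜 0, y ≠ 0 ∧ ∀ r ∈ 𝒜 ν, ∃ r₀ ∈ 𝒜 0, y * r = x * r₀ := by
  have := Algebra.FiniteType.isNoetherianRing k R
  obtain ⟨U, hUν, hspan⟩ := (Submodule.fg_span_iff_fg_span_finset_subset
    (𝒜 ν : Set R)).1 (IsNoetherian.noetherian (Ideal.span (𝒜 ν : Set R)))
  obtain ⟨y, ⟨hy0, hy⟩, hdvd⟩ := (SetLike.GradeZero.submonoid 𝒜 ⊓ nonZeroDivisors R)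
    |>.exists_mem_forall_dvd_mul x U fun t ht => by
      obtain ⟨c, d, -, hd, hd0, htd⟩ := hbir ν t x (hUν ht) hx hx0
      exact ⟨d, ⟨hd, mem_nonZeroDivisors_of_ne_zero hd0⟩, c, by rw [mul_comm, htd]⟩
  refine ⟨y, hy0, nonZeroDivisors.ne_zero hy, fun r hr => ?_⟩
  have hrU : r ∈ Submodule.span R (U : Set R) := hspan ▸ Submodule.subset_span hr
  obtain ⟨r₀, hr₀⟩ := Ideal.dvd_mul_of_mem_span hdvd hrU
  have hyr : y * r ∈ 𝒜 ν := by simpa using SetLike.mul_mem_graded hy0 hr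
  exact ⟨r₀, DirectSum.mem_zero_of_mul_mem 𝒜 hx hx0 (hr₀ ▸ hyr), hr₀⟩

theorem stmt6 (k : Type u) [Field k]
    (G : Type u) [AddCommGroup G] [DecidableEq G] [Module.Free ℤ G] [Module.Finite ℤ G]
    (Λ : AddSubmonoid G) (hΛ : ∀ g : G, g ∈ Λ → -g ∈ Λ → g = 0)
    (R : Type u) [CommRing R] [IsDomain R] [Algebra k R] [Algebra.FiniteType k R]
    (𝒜 : ↥Λ → Submodule k R) [GradedAlgebra 𝒜]
    (hmul : ∀ μ ν : ↥Λ, 𝒜 μ * 𝒜 ν = 𝒜 (μ + ν))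
    -- birationality: every ratio of homogeneous elements of equal degree is a ratio of
    -- degree-zero elements
    (hbir : ∀ (μ : ↥Λ) (a b : R), a ∈ 𝒜 μ → b ∈ 𝒜 μ → b ≠ 0 →
      ∃ c d : R, c ∈ 𝒜 0 ∧ d ∈ 𝒜 0 ∧ d ≠ 0 ∧ a * d = b * c)
    (ν : ↥Λ) (hν : 𝒜 ν ≠ ⊥)
    (x : R) (hx : x ∈ 𝒜 ν) (hx0 : x ≠ 0) :
    ∃ y ∈ 𝒜 0, y ≠ 0 ∧ ∀ r ∈ 𝒜 ν, ∃ r₀ ∈ 𝒜 0, y * r = x * r₀ :=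
  stmt6_general k G Λ R 𝒜 hbir ν x hx hx0
end
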